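/- For any arithmetic function f, Σ_{k=1}^n f(gcd(k,n))·e^{-2πikm/n} = Σ_{d|n} f(n/d)·c_d(m), where c_d(m) = Σ_{k=1, gcd(k,d)=1}^d e^{2πikm/d} is the Ramanujan sum; i.e., the DFT of f of the gcd equals the Dirichlet convolution of f with the Ramanujan sum m ↦ c_·(m). -/

import Mathlib

open Finset

/-- The Ramanujan sum `c_d(m)`. -/
noncomputable def ramanujanSum (d m : ℕ) : ℂ :=
  ∑ k ∈ (Finset.Icc 1 d).filter (fun k => Nat.gcd k d = 1),
    Complex.exp (2 * Real.pi * Complex.I * k * m / d)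

/-!
The reflection `k ↦ n - k` preserves `gcd k n` and flips the sign of the exponent, so it suffices
to treat `exp (+2πikm/n)`. Grouping `k` by `g = gcd k n` and writing `k = g j` with `j` a unit
mod `n / g`, the fibre over `g` contributes `f g * c_{n/g}(m)`; re-indexing the divisors by
`d = n / g` gives the Dirichlet convolution.
-/

theorem sum_Icc_one_reflect {M : Type*} [AddCommMonoid M] (n : ℕ) (h : ℕ → M) (h0 : h 0 = h n) :
    ∑ k ∈ Icc 1 n, h (n - k) = ∑ k ∈ Icc 1 n, h k := by
  have reflect : ∑ k ∈ Icc 1 n, h (n - k) = ∑ k ∈ range n, h k := by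
    rw [← Ico_add_one_right_eq_Icc, sum_Ico_reflect h 1 le_rfl, Nat.add_sub_cancel, Nat.sub_self,
      Nat.Ico_zero_eq_range]
  rcases Nat.eq_zero_or_pos n with rfl | hn
  · simp
  rw [reflect, ← Ico_add_one_right_eq_Icc, sum_Ico_succ_top hn, sum_range_eq_add_Ico _ hn, h0,
    add_comm]

theorem sum_filter_gcd_mul_eq_sum_coprime {M : Type*} [AddCommMonoid M] {g : ℕ} (hg : g ≠ 0)
    (e : ℕ) (ψ : ℕ → M) :
    ∑ k ∈ Icc 1 (g * e) with k.gcd (g * e) = g, ψ k = ∑ j ∈ Icc 1 e with j.gcd e = 1, ψ (g * j) := by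
  symm
  refine sum_bij (fun j _ => g * j) ?_ ?_ ?_ (fun _ _ => rfl)
  · intro j hj
    simp only [mem_filter, mem_Icc] at hj ⊢
    refine ⟨⟨?_, ?_⟩, ?_⟩
    · nlinarith [Nat.pos_of_ne_zero hg]
    · exact Nat.mul_le_mul_left g hj.1.2
    · rw [Nat.gcd_mul_left, hj.2, mul_one]
  · intro a _ b _ hab
    exact Nat.eq_of_mul_eq_mul_left (Nat.pos_of_ne_zero hg) hab
  · intro k hk
    simp only [mem_filter, mem_Icc] at hk
    obtain ⟨⟨hk1, hke⟩, hgcd⟩ := hk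
    obtain ⟨j, rfl⟩ : g ∣ k := hgcd ▸ Nat.gcd_dvd_left k (g * e)
    rw [Nat.gcd_mul_left, Nat.mul_eq_left hg] at hgcd
    refine ⟨j, ?_, rfl⟩
    simp only [mem_filter, mem_Icc]
    refine ⟨⟨Nat.pos_of_ne_zero ?_, Nat.le_of_mul_le_mul_left hke (Nat.pos_of_ne_zero hg)⟩, hgcd⟩
    rintro rfl
    simp at hk1

theorem sum_Icc_eq_sum_divisors_sum_coprime {M : Type*} [AddCommMonoid M] {n : ℕ} (hn : n ≠ 0)
    (φ : ℕ → ℕ → M) :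
    ∑ k ∈ Icc 1 n, φ (k.gcd n) k =
      ∑ g ∈ n.divisors, ∑ j ∈ Icc 1 (n / g) with j.gcd (n / g) = 1, φ g (g * j) := by
  rw [← sum_fiberwise_of_maps_to (g := fun k => k.gcd n) (t := n.divisors)
    fun k _ => Nat.mem_divisors.mpr ⟨Nat.gcd_dvd_right k n, hn⟩]
  refine sum_congr rfl fun g hg => ?_
  obtain ⟨hgn, -⟩ := Nat.mem_divisors.mp hg
  have hg0 : g ≠ 0 := ne_zero_of_dvd_ne_zero hn hgn
  obtain ⟨e, rfl⟩ := hgn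
  rw [Nat.mul_div_cancel_left e (Nat.pos_of_ne_zero hg0), ← sum_filter_gcd_mul_eq_sum_coprime hg0]
  exact sum_congr rfl fun k hk => by rw [(mem_filter.mp hk).2]

open Complex Real in
theorem exp_two_pi_I_mul_sub_mul_div {n : ℕ} (hn : n ≠ 0) (x : ℂ) (m : ℕ) :
    exp (2 * π * I * (n - x) * m / n) = exp (-(2 * π * I * x * m / n)) := by
  have hn_cast : (n : ℂ) ≠ 0 := Nat.cast_ne_zero.mpr hn
  rw [show 2 * π * I * (n - x) * m / n = m * (2 * π * I) + -(2 * π * I * x * m / n) by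
    field_simp; ring, Complex.exp_add, exp_nat_mul_two_pi_mul_I, one_mul]

theorem sum_Icc_gcd_mul_exp_eq_sum_divisors (f : ℕ → ℂ) {n : ℕ} (hn : n ≠ 0) (m : ℕ) :
    ∑ k ∈ Icc 1 n, f (k.gcd n) * Complex.exp (2 * Real.pi * Complex.I * k * m / n) =
      ∑ g ∈ n.divisors, f g * ramanujanSum (n / g) m := by
  rw [sum_Icc_eq_sum_divisors_sum_coprime hn
    fun g k => f g * Complex.exp (2 * Real.pi * Complex.I * k * m / n)]
  refine sum_congr rfl fun g hg => ?_
  obtain ⟨hgn, -⟩ := Nat.mem_divisors.mp hg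
  have hg0 : (g : ℂ) ≠ 0 := Nat.cast_ne_zero.mpr (ne_zero_of_dvd_ne_zero hn hgn)
  rw [ramanujanSum, mul_sum]
  refine sum_congr rfl fun j _ => ?_
  rw [Nat.cast_div hgn hg0, Nat.cast_mul]
  congr 2
  field_simp

theorem dft_f_gcd_eq_dirichlet_conv_ramanujan_general (f : ℕ → ℂ) (n m : ℕ) :
    ∑ k ∈ Finset.Icc 1 n, f (Nat.gcd k n) *
        Complex.exp (-(2 * Real.pi * Complex.I * k * m / n)) =
      ∑ d ∈ n.divisors, f (n / d) * ramanujanSum d m := by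
  rcases eq_or_ne n 0 with rfl | hn
  · simp
  let h (k : ℕ) : ℂ := f (k.gcd n) * Complex.exp (2 * Real.pi * Complex.I * k * m / n)
  have h_zero : h 0 = h n := by
    have := exp_two_pi_I_mul_sub_mul_div hn 0 m
    simp_all [h]
  calc _ = ∑ k ∈ Icc 1 n, h (n - k) := sum_congr rfl fun k hk => by
          rw [mem_Icc] at hk
          simp only [h, Nat.gcd_self_sub_left hk.2, Nat.cast_sub hk.2,
            exp_two_pi_I_mul_sub_mul_div hn]
    _ = ∑ k ∈ Icc 1 n, h k := sum_Icc_one_reflect n h h_zero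
    _ = ∑ g ∈ n.divisors, f g * ramanujanSum (n / g) m :=
          sum_Icc_gcd_mul_exp_eq_sum_divisors f hn m
    _ = _ := by
          rw [← Nat.sum_div_divisors n]
          exact sum_congr rfl fun d hd => by rw [Nat.div_div_self (Nat.dvd_of_mem_divisors hd) hn]

theorem dft_f_gcd_eq_dirichlet_conv_ramanujan (f : ℕ → ℂ) (n m : ℕ) (hn : 1 ≤ n) :
    ∑ k ∈ Finset.Icc 1 n, f (Nat.gcd k n) *
        Complex.exp (-(2 * Real.pi * Complex.I * k * m / n)) =
      ∑ d ∈ n.divisors, f (n / d) * ramanujanSum d m :=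
  dft_f_gcd_eq_dirichlet_conv_ramanujan_general f n m
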